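/- arXiv:2101.06028 — 3 statements merged into one kernel-verified Lean document; each statement's English description precedes it below -/
import Mathlib

section
/- For the single-user energy-efficiency constraint log₂(1 + h² p / σ²) / p ≥ e^min with h, σ², e^min > 0, there exists P > 0 such that the constraint holds for p ∈ (0, P] and fails for p > P; i.e., the feasible set of powers is an interval (0, P]. -/
/-!
With `c = h² / σ²`, the constraint reads `e^min · ln 2 ≤ log (1 + c p) / p`. The right-hand side is
`c` times the slope of the strictly concave `log` between `1` and `1 + c p`, so it strictly decreases
in `p`, from its limit `c` at `0⁺` (the derivative of `p ↦ log (1 + c p)` at `0`) to `0` at `∞`.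
The hypothesis puts `e^min · ln 2` strictly between these limits, so by the intermediate value
theorem the level is attained at a unique `P`, and the constraint holds exactly for `p ≤ P`.
-/

open Real Set Filter Topology

theorem StrictAntiOn.exists_le_iff_le_of_tendsto {g : ℝ → ℝ} {a k L M : ℝ}
    (hcont : ContinuousOn g (Ioi a)) (hanti : StrictAntiOn g (Ioi a))
    (hleft : Tendsto g (𝓝[>] a) (𝓝 L)) (htop : Tendsto g atTop (𝓝 M))
    (hkL : k < L) (hMk : M < k) :
    ∃ P, a < P ∧ ∀ p, a < p → (k ≤ g p ↔ p ≤ P) := by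
  obtain ⟨x, hkx, hax⟩ :=
    ((hleft.eventually (lt_mem_nhds hkL)).and self_mem_nhdsWithin).exists
  obtain ⟨y, hyk, hay⟩ :=
    ((htop.eventually (gt_mem_nhds hMk)).and (eventually_gt_atTop a)).exists
  have hxy : x < y := (hanti.lt_iff_gt hay hax).1 (hyk.trans hkx)
  obtain ⟨P, ⟨hxP, -⟩, hPk⟩ := intermediate_value_Icc' hxy.le
    (hcont.mono fun z hz => hax.trans_le hz.1) ⟨hyk.le, hkx.le⟩
  have haP : a < P := hax.trans_le hxP
  exact ⟨P, haP, fun _ hp => hPk ▸ hanti.le_iff_ge haP hp⟩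

theorem strictAntiOn_slope_log_one : StrictAntiOn (slope log 1) (Ioi 1) := fun x hx y hy hxy => by
  have h0 : ∀ z ∈ Ioi (1 : ℝ), z ∈ Ioi (0 : ℝ) := fun z hz => mem_Ioi.2 (zero_lt_one.trans hz)
  simpa only [slope_def_field] using strictConcaveOn_log_Ioi.secant_strict_mono
    (mem_Ioi.2 one_pos) (h0 x hx) (h0 y hy) (ne_of_gt hx) (ne_of_gt hy) hxy

theorem tendsto_slope_log_one_atTop : Tendsto (slope log 1) atTop (𝓝 0) := by
  refine (tendsto_pow_log_div_mul_add_atTop 1 (-1) 1 one_ne_zero).congr fun x => ?_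
  rw [slope_def_field, log_one]
  ring

theorem log_one_add_mul_div_eq_mul_slope_log {c : ℝ} (hc : c ≠ 0) (p : ℝ) :
    log (1 + c * p) / p = c * slope log 1 (1 + c * p) := by
  rw [slope_def_field, log_one, sub_zero, add_sub_cancel_left, mul_div_assoc',
    mul_div_mul_left _ _ hc]

theorem strictAntiOn_log_one_add_mul_div {c : ℝ} (hc : 0 < c) :
    StrictAntiOn (fun p => log (1 + c * p) / p) (Ioi 0) := fun x hx y hy hxy => by
  simp only [log_one_add_mul_div_eq_mul_slope_log hc.ne']
  have hmem : ∀ z ∈ Ioi (0 : ℝ), 1 + c * z ∈ Ioi 1 := fun z hz => by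
    simpa using mul_pos hc hz
  exact mul_lt_mul_of_pos_left
    (strictAntiOn_slope_log_one (hmem x hx) (hmem y hy) (by gcongr)) hc

theorem continuousOn_log_one_add_mul_div {c : ℝ} (hc : 0 ≤ c) :
    ContinuousOn (fun p => log (1 + c * p) / p) (Ioi 0) :=
  ((continuousOn_const.add (continuousOn_const.mul continuousOn_id)).log fun _ hp =>
    (add_pos_of_pos_of_nonneg one_pos (mul_nonneg hc (le_of_lt hp))).ne').div
      continuousOn_id fun _ hp => ne_of_gt hp

theorem tendsto_log_one_add_mul_div_nhdsGT_zero (c : ℝ) :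
    Tendsto (fun p => log (1 + c * p) / p) (𝓝[>] 0) (𝓝 c) := by
  have hderiv : HasDerivAt (fun p => log (1 + c * p)) c 0 := by
    simpa using (((hasDerivAt_id (0 : ℝ)).const_mul c).const_add 1).log (by simp)
  refine ((hasDerivAt_iff_tendsto_slope_left_right.1 hderiv).2).congr fun p => ?_
  simp [slope_def_field]

theorem tendsto_log_one_add_mul_div_atTop {c : ℝ} (hc : 0 < c) :
    Tendsto (fun p => log (1 + c * p) / p) atTop (𝓝 0) := by
  have harg : Tendsto (fun p => 1 + c * p) atTop atTop :=
    tendsto_atTop_add_const_left _ _ (tendsto_id.const_mul_atTop hc)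
  simpa only [log_one_add_mul_div_eq_mul_slope_log hc.ne', mul_zero, Function.comp_def] using
    (tendsto_slope_log_one_atTop.comp harg).const_mul c

theorem ee_feasible_interval_general (h σ2 emin : ℝ) (he : 0 < emin)
    (hlim : emin < h ^ 2 / (σ2 * Real.log 2)) :
    ∃ P : ℝ, 0 < P ∧ ∀ p : ℝ, 0 < p →
      (emin ≤ Real.logb 2 (1 + h ^ 2 * p / σ2) / p ↔ p ≤ P) := by
  set c := h ^ 2 / σ2
  have hlog2 : 0 < log 2 := log_pos one_lt_two
  have hkc : emin * log 2 < c := by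
    rwa [← div_div, lt_div_iff₀ hlog2] at hlim
  have hc : 0 < c := (mul_pos he hlog2).trans hkc
  obtain ⟨P, hP, hiff⟩ := (strictAntiOn_log_one_add_mul_div hc).exists_le_iff_le_of_tendsto
    (continuousOn_log_one_add_mul_div hc.le) (tendsto_log_one_add_mul_div_nhdsGT_zero c)
    (tendsto_log_one_add_mul_div_atTop hc) hkc (mul_pos he hlog2)
  refine ⟨P, hP, fun p hp => ?_⟩
  rw [mul_div_right_comm, logb, div_right_comm, le_div_iff₀ hlog2]
  exact hiff p hp

/-- For the single-user energy-efficiency constraint `log₂(1+h²p/σ²)/p ≥ e^min`,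
the feasible set of positive powers is an interval `(0, P]`. -/
theorem ee_feasible_interval (h σ2 emin : ℝ) (hh : 0 < h) (hσ : 0 < σ2) (he : 0 < emin)
    (hlim : emin < h ^ 2 / (σ2 * Real.log 2)) :
    ∃ P : ℝ, 0 < P ∧ ∀ p : ℝ, 0 < p →
      (emin ≤ Real.logb 2 (1 + h ^ 2 * p / σ2) / p ↔ p ≤ P) :=
  ee_feasible_interval_general h σ2 emin he hlim
end

section
/- On the energy-efficiency boundary surface defined implicitly by log₂(1 + h_i² p_i / (Σ_{j=i+1}^M h_j² p_j + σ²)) = e_i^min · p_i with all h_j, σ², e_i^min > 0, the implicit derivative ∂p_i/∂p_j is ≤ 0 for every j with i+1 ≤ j ≤ M, at any point of the surface where p_i > 0. -/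
open Finset

/-!
Write `A = h_i²` and `c = e_i^min · log 2`, so that along the surface
`log (1 + A φ / I) = c φ`. Differentiating in `p_j` gives
`φ' · I · (A - c (I + A φ)) = A φ · h_j²  ≥ 0`.
The coefficient `A - c (I + A φ)` is negative: this is the strict inequality
`x / (1 + x) < log (1 + x)` at `x = A φ / I`, after substituting `log (1 + x) = c φ`.
Hence `φ' ≤ 0`.
-/

open Filter Topology Real

lemma div_one_add_lt_log_one_add {x : ℝ} (hx : 0 < x) : x / (1 + x) < log (1 + x) :=
  calc x / (1 + x) ≤ 2 * x / (x + 2) := by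
        rw [div_le_div_iff₀ (by positivity) (by positivity)]; nlinarith
    _ < log (1 + x) := lt_log_one_add_of_pos hx

lemma lt_mul_add_of_log_one_add_div_eq {A I a c : ℝ} (hA : 0 < A) (hI : 0 < I) (ha : 0 < a)
    (hlog : log (1 + A * a / I) = c * a) : A < c * (I + A * a) := by
  have key := div_one_add_lt_log_one_add (show 0 < A * a / I by positivity)
  have hfrac : A * a / I / (1 + A * a / I) = A * a / (I + A * a) := by
    field_simp
  rw [hfrac, hlog, div_lt_iff₀ (by positivity)] at key
  nlinarith

lemma HasDerivAt.log_one_add_mul_div {φ I : ℝ → ℝ} {φ' B A t : ℝ} (hφ : HasDerivAt φ φ' t)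
    (hI : HasDerivAt I B t) (hI₀ : I t ≠ 0) (hIφ : I t + A * φ t ≠ 0) :
    HasDerivAt (fun s => Real.log (1 + A * φ s / I s))
      ((A * φ' * I t - A * φ t * B) / (I t * (I t + A * φ t))) t := by
  have hu : 1 + A * φ t / I t = (I t + A * φ t) / I t := by field_simp
  have hq : HasDerivAt (fun s => 1 + A * φ s / I s)
      ((A * φ' * I t - A * φ t * B) / I t ^ 2) t := by
    simpa using ((hφ.const_mul A).div hI hI₀).const_add 1
  convert hq.log (by rw [hu]; exact div_ne_zero hIφ hI₀) using 1
  rw [hu]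
  field_simp

lemma HasDerivAt.nonpos_of_log_one_add_mul_div_eq {φ I : ℝ → ℝ} {φ' B A c t : ℝ}
    (hφ : HasDerivAt φ φ' t) (hI : HasDerivAt I B t) (hB : 0 ≤ B) (hA : 0 < A)
    (hI₀ : 0 < I t) (hφ₀ : 0 < φ t)
    (hsurf : ∀ᶠ s in 𝓝 t, Real.log (1 + A * φ s / I s) = c * φ s) : φ' ≤ 0 := by
  have hsum : 0 < I t + A * φ t := by positivity
  have hderiv : (A * φ' * I t - A * φ t * B) / (I t * (I t + A * φ t)) = c * φ' :=
    ((hφ.log_one_add_mul_div hI hI₀.ne' hsum.ne').congr_of_eventuallyEq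
      (EventuallyEq.symm hsurf)).unique (hφ.const_mul c)
  have hcoeff : A < c * (I t + A * φ t) :=
    lt_mul_add_of_log_one_add_div_eq hA hI₀ hφ₀ hsurf.self_of_nhds
  rw [div_eq_iff (by positivity)] at hderiv
  have hrhs : 0 ≤ A * φ t * B := by positivity
  nlinarith [mul_pos hI₀ (sub_pos.mpr hcoeff)]

theorem ee_surface_implicit_deriv_nonpos_general (M : ℕ) (h : Fin M → ℝ) (σ2 emin : ℝ)
    (hh : ∀ k, 0 < h k) (hσ : 0 < σ2)
    (i j : Fin M) (p : Fin M → ℝ) (hp : ∀ k, 0 ≤ p k)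
    (φ : ℝ → ℝ)
    -- interference-plus-noise term as a function of `p_j = t`
    (I : ℝ → ℝ)
    (hI : ∀ t, I t = (∑ k ∈ univ.filter (fun k => i < k ∧ k ≠ j), (h k) ^ 2 * p k)
        + (h j) ^ 2 * t + σ2)
    -- the surface equation holds along `φ` for all positive `p_j`
    (hsurf : ∀ t, 0 < t → Real.logb 2 (1 + (h i) ^ 2 * φ t / I t) = emin * φ t)
    (t₀ : ℝ) (ht₀ : 0 < t₀) (hφpos : 0 < φ t₀)
    (hdiff : DifferentiableAt ℝ φ t₀) :
    deriv φ t₀ ≤ 0 := by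
  have hS : 0 ≤ ∑ k ∈ univ.filter (fun k => i < k ∧ k ≠ j), h k ^ 2 * p k :=
    sum_nonneg fun k _ => mul_nonneg (sq_nonneg _) (hp k)
  have hI₀ : 0 < I t₀ := by rw [hI]; have := hh j; positivity
  have hIderiv : HasDerivAt I (h j ^ 2) t₀ := by
    rw [funext hI]
    simpa using (((hasDerivAt_id t₀).const_mul (h j ^ 2)).const_add
      (∑ k ∈ univ.filter (fun k => i < k ∧ k ≠ j), h k ^ 2 * p k)).add_const σ2
  have hsurf_log : ∀ᶠ t in 𝓝 t₀,
      log (1 + h i ^ 2 * φ t / I t) = (emin * log 2) * φ t := by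
    filter_upwards [Ioi_mem_nhds ht₀] with t ht
    have := hsurf t ht
    rw [logb, div_eq_iff (log_pos one_lt_two).ne'] at this
    rw [this]; ring
  exact HasDerivAt.nonpos_of_log_one_add_mul_div_eq hdiff.hasDerivAt hIderiv (sq_nonneg _)
    (pow_pos (hh i) 2) hI₀ hφpos hsurf_log

/-- On the energy-efficiency boundary surface
`log₂(1 + h_i² p_i / (Σ_{k>i} h_k² p_k + σ²)) = e_i^min p_i`, solving for `p_i` as a
(differentiable) function `φ` of `p_j` (for `i < j ≤ M`, other coordinates fixed) gives
`∂p_i/∂p_j ≤ 0` at any surface point where `p_i > 0` and the implicit function theorem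
applies (`∂F/∂p_i ≠ 0`). -/
theorem ee_surface_implicit_deriv_nonpos (M : ℕ) (h : Fin M → ℝ) (σ2 emin : ℝ)
    (hh : ∀ k, 0 < h k) (hσ : 0 < σ2) (he : 0 < emin)
    (i j : Fin M) (hij : i < j) (p : Fin M → ℝ) (hp : ∀ k, 0 ≤ p k)
    (φ : ℝ → ℝ)
    -- interference-plus-noise term as a function of `p_j = t`
    (I : ℝ → ℝ)
    (hI : ∀ t, I t = (∑ k ∈ univ.filter (fun k => i < k ∧ k ≠ j), (h k) ^ 2 * p k)
        + (h j) ^ 2 * t + σ2)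
    -- the surface equation holds along `φ` for all positive `p_j`
    (hsurf : ∀ t, 0 < t → Real.logb 2 (1 + (h i) ^ 2 * φ t / I t) = emin * φ t)
    (t₀ : ℝ) (ht₀ : 0 < t₀) (hφpos : 0 < φ t₀)
    (hdiff : DifferentiableAt ℝ φ t₀)
    -- nondegeneracy: `∂F/∂p_i ≠ 0` at the surface point
    (hnd : (h i) ^ 2 / ((I t₀ + (h i) ^ 2 * φ t₀) * Real.log 2) ≠ emin) :
    deriv φ t₀ ≤ 0 :=
  ee_surface_implicit_deriv_nonpos_general M h σ2 emin hh hσ i j p hp φ I hI hsurf t₀ ht₀ hφpos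
    hdiff
end

section
/- Given a polyblock with vertex set T and a point x with x ≺ v for some v ∈ T, the set P' = P \ {y : y ≻ x} (removing the strictly dominating open upper cone K⁺_x = {y : y_i > x_i for all i}) is again a polyblock, with vertex set T' = (T \ T*) ∪ {v + (x_i − v_i)e^i : v ∈ T*, i = 1,…,N}, where T* = {v ∈ T : v ≻ x} and e^i is the i-th standard basis vector. -/
/-!
A point `y` of the box `[a, v]` avoids the open cone `{y | x ≺ y}` exactly when `y i ≤ x i` for
some `i`. If `x ≺ v`, such points form the box `[a, update v i (x i)]`, so removing the cone
splits `[a, v]` into `N` smaller boxes; if `x ⊀ v`, the box misses the cone altogether.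
Removing the cone from a union of boxes acts box by box.
-/

open Set Function

theorem Pi.le_update_iff_of_le {ι α : Type*} [DecidableEq ι] [Preorder α] {v x y : ι → α}
    {i : ι} (hi : x i ≤ v i) : y ≤ update v i (x i) ↔ y ≤ v ∧ y i ≤ x i := by
  rw [le_update_iff]
  refine ⟨fun ⟨hyi, hy⟩ => ⟨fun j => ?_, hyi⟩, fun ⟨hy, hyi⟩ => ⟨hyi, fun j _ => hy j⟩⟩
  by_cases hj : j = i
  · subst hj
    exact hyi.trans hi
  · exact hy j hj

theorem Icc_sdiff_strictUpperCone_of_forall_lt {ι α : Type*} [DecidableEq ι] [LinearOrder α]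
    {a v x : ι → α} (hv : ∀ i, x i < v i) :
    Icc a v \ {y | ∀ i, x i < y i} = ⋃ i, Icc a (update v i (x i)) := by
  ext y
  simp only [mem_sdiff, mem_Icc, mem_ofPred_eq, mem_iUnion, not_forall, not_lt,
    Pi.le_update_iff_of_le (hv _).le]
  tauto

theorem Icc_sdiff_strictUpperCone_of_not_forall_lt {ι α : Type*} [Preorder α] {a v x : ι → α}
    (hv : ¬ ∀ i, x i < v i) : Icc a v \ {y | ∀ i, x i < y i} = Icc a v :=
  sdiff_eq_left.2 <| disjoint_left.2 fun _ hy hxy => hv fun i => (hxy i).trans_le (hy.2 i)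

theorem polyblock_remove_cone_general (N : ℕ) (T : Finset (Fin N → ℝ))
    (x : Fin N → ℝ) :
    (⋃ v ∈ T, Set.Icc (0 : Fin N → ℝ) v) \ {y : Fin N → ℝ | ∀ i, x i < y i}
      = ⋃ w ∈ ((T : Set (Fin N → ℝ)) \ {v ∈ (T : Set (Fin N → ℝ)) | ∀ i, x i < v i})
            ∪ (⋃ v ∈ {v ∈ (T : Set (Fin N → ℝ)) | ∀ i, x i < v i},
                ⋃ i : Fin N, {Function.update v i (x i)}),
          Set.Icc (0 : Fin N → ℝ) w := by
  set S : Set (Fin N → ℝ) := ↑T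
  set Sx := {v ∈ S | ∀ i, x i < v i}
  have hS : ⋃ v ∈ T, Icc (0 : Fin N → ℝ) v = ⋃ v ∈ (S \ Sx) ∪ Sx, Icc 0 v := by
    rw [sdiff_union_of_subset (sep_subset _ _)]
    rfl
  rw [hS, biUnion_union, biUnion_union, union_sdiff_distrib]
  simp only [iUnion_sdiff, biUnion_iUnion, biUnion_singleton]
  congr 1
  · exact iUnion₂_congr fun v hv =>
      Icc_sdiff_strictUpperCone_of_not_forall_lt fun h => hv.2 ⟨hv.1, h⟩
  · exact iUnion₂_congr fun v hv => Icc_sdiff_strictUpperCone_of_forall_lt hv.2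

/-- Polyblock reduction step: removing the open upper cone `K⁺_x = {y : y ≻ x}` from a
polyblock with vertex set `T` yields the polyblock with vertex set
`T' = (T \ T*) ∪ {v + (x_i − v_i)e^i : v ∈ T*, i = 1,…,N}`, where `T* = {v ∈ T : v ≻ x}`. -/
theorem polyblock_remove_cone (N : ℕ) (T : Finset (Fin N → ℝ))
    (hTpos : ∀ v ∈ T, ∀ i, 0 ≤ v i)
    (x : Fin N → ℝ) (hx : ∀ i, 0 ≤ x i)
    (hdom : ∃ v ∈ T, ∀ i, x i < v i) :
    (⋃ v ∈ T, Set.Icc (0 : Fin N → ℝ) v) \ {y : Fin N → ℝ | ∀ i, x i < y i}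
      = ⋃ w ∈ ((T : Set (Fin N → ℝ)) \ {v ∈ (T : Set (Fin N → ℝ)) | ∀ i, x i < v i})
            ∪ (⋃ v ∈ {v ∈ (T : Set (Fin N → ℝ)) | ∀ i, x i < v i},
                ⋃ i : Fin N, {Function.update v i (x i)}),
          Set.Icc (0 : Fin N → ℝ) w :=
  polyblock_remove_cone_general N T x
end
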